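/- For λ, θ, m, p > 0, n ≥ 1, and a natural number q with q/p < mn, the q-th moment of the minimum of n i.i.d. generalized Burr XII variables equals mn (λ/θ)^{q/p} B(q/p + 1, mn − q/p), where B is the Beta function. -/

import Mathlib

/-!
Substituting `y = x ^ p` turns the moment into `∫₀^∞ y^(q/p) / (λ + θ y)^(mn+1) dy`, which
the scaling `y = (λ/θ) v` and the substitution `t = v / (1 + v)` reduce to Euler's integral
`∫₀¹ t^(a-1) (1-t)^(b-1) dt = B(a, b)` with `a = q/p + 1`, `b = mn - q/p`.
-/

open MeasureTheory Real Set ProbabilityTheory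

theorem Complex.betaIntegral_ofReal (a b : ℝ) :
    Complex.betaIntegral a b = ↑(∫ t in (0:ℝ)..1, t ^ (a - 1) * (1 - t) ^ (b - 1)) := by
  rw [Complex.betaIntegral, ← intervalIntegral.integral_ofReal]
  refine intervalIntegral.integral_congr fun t ht => ?_
  rw [uIcc_of_le zero_le_one] at ht
  push_cast
  rw [Complex.ofReal_cpow ht.1, Complex.ofReal_cpow (sub_nonneg.2 ht.2)]
  push_cast
  ring

theorem integral_Ioo_rpow_mul_one_sub_rpow {a b : ℝ} (ha : 0 < a) (hb : 0 < b) :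
    ∫ t in Ioo (0:ℝ) 1, t ^ (a - 1) * (1 - t) ^ (b - 1) = beta a b := by
  rw [beta_eq_betaIntegralReal a b ha hb, Complex.betaIntegral_ofReal, Complex.ofReal_re,
    intervalIntegral.integral_of_le zero_le_one, integral_Ioc_eq_integral_Ioo]

theorem image_div_one_add_Ioi : (fun v : ℝ => v / (1 + v)) '' Ioi 0 = Ioo 0 1 := by
  ext t
  constructor
  · rintro ⟨v, hv, rfl⟩
    have hv : 0 < v := hv
    exact ⟨by positivity, (div_lt_one (by positivity)).2 (by linarith)⟩
  · rintro ⟨ht0, ht1⟩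
    refine ⟨t / (1 - t), div_pos ht0 (sub_pos.2 ht1), ?_⟩
    have : 1 - t ≠ 0 := (sub_pos.2 ht1).ne'
    field_simp
    ring

theorem strictMonoOn_div_one_add : StrictMonoOn (fun v : ℝ => v / (1 + v)) (Ioi 0) := by
  intro v hv w hw hvw
  have hv : 0 < v := hv
  have hw : 0 < w := hw
  simp only
  rw [div_lt_div_iff₀ (by positivity) (by positivity)]
  linarith

theorem integral_Ioi_rpow_div_one_add_rpow {a b : ℝ} (ha : 0 < a) (hb : 0 < b) :
    ∫ v in Ioi (0:ℝ), v ^ (a - 1) / (1 + v) ^ (a + b) = beta a b := by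
  have hderiv : ∀ v ∈ Ioi (0:ℝ),
      HasDerivWithinAt (fun v : ℝ => v / (1 + v)) (1 / (1 + v) ^ 2) (Ioi 0) v := by
    intro v hv
    have hv : 0 < v := hv
    have h1v : 1 + v ≠ 0 := by positivity
    exact (((hasDerivAt_id' v).div ((hasDerivAt_id' v).const_add 1) h1v).congr_deriv
      (by ring)).hasDerivWithinAt
  have key := integral_image_eq_integral_abs_deriv_smul measurableSet_Ioi hderiv
    strictMonoOn_div_one_add.injOn (fun t => t ^ (a - 1) * (1 - t) ^ (b - 1))
  rw [image_div_one_add_Ioi, integral_Ioo_rpow_mul_one_sub_rpow ha hb] at key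
  rw [key]
  refine setIntegral_congr_fun measurableSet_Ioi fun v hv => ?_
  have hv : 0 < v := hv
  have h1v : 0 < 1 + v := by linarith
  have hsub : 1 - v / (1 + v) = (1 + v)⁻¹ := by field_simp; ring
  have hpow : (1 + v) ^ (a + b) = (1 + v) ^ (a - 1) * (1 + v) ^ (b - 1) * (1 + v) ^ (2:ℕ) := by
    rw [← rpow_natCast, ← rpow_add h1v, ← rpow_add h1v]
    push_cast
    ring_nf
  rw [hsub, div_rpow hv.le h1v.le, inv_rpow h1v.le, hpow, abs_of_pos (by positivity), smul_eq_mul]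
  have : (1 + v) ^ (a - 1) ≠ 0 := (rpow_pos_of_pos h1v _).ne'
  have : (1 + v) ^ (b - 1) ≠ 0 := (rpow_pos_of_pos h1v _).ne'
  field_simp

theorem integral_Ioi_rpow_div_add_mul_rpow {lam θ a b : ℝ} (hlam : 0 < lam) (hθ : 0 < θ)
    (ha : 0 < a) (hb : 0 < b) :
    ∫ y in Ioi (0:ℝ), y ^ (a - 1) / (lam + θ * y) ^ (a + b) = beta a b / (lam ^ b * θ ^ a) := by
  set c := lam / θ
  have hc : 0 < c := div_pos hlam hθ
  have hscale : ∀ v ∈ Ioi (0:ℝ), (c * v) ^ (a - 1) / (lam + θ * (c * v)) ^ (a + b)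
      = c ^ (a - 1) / lam ^ (a + b) * (v ^ (a - 1) / (1 + v) ^ (a + b)) := by
    intro v hv
    have hv : 0 < v := hv
    have hden : lam + θ * (c * v) = lam * (1 + v) := by simp only [c]; field_simp
    rw [hden, mul_rpow hc.le hv.le, mul_rpow hlam.le (by positivity)]
    ring
  have hsubst :=
    integral_comp_mul_left_Ioi' (fun y => y ^ (a - 1) / (lam + θ * y) ^ (a + b)) 0 hc
  rw [mul_zero] at hsubst
  rw [← hsubst, setIntegral_congr_fun measurableSet_Ioi hscale,
    integral_const_mul, integral_Ioi_rpow_div_one_add_rpow ha hb, smul_eq_mul,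
    rpow_sub_one hc.ne', div_rpow hlam.le hθ.le, rpow_add hlam]
  have : lam ^ a ≠ 0 := (rpow_pos_of_pos hlam a).ne'
  have : θ ^ a ≠ 0 := (rpow_pos_of_pos hθ a).ne'
  have : lam ^ b ≠ 0 := (rpow_pos_of_pos hlam b).ne'
  field_simp [c]

theorem genBurrXII_min_moment_general (lam θ m p : ℝ) (hlam : 0 < lam) (hθ : 0 < θ)
    (hp : 0 < p) (n : ℕ)
    (q : ℕ) (hq : (q : ℝ) / p < m * n) :
    (∫ x in Ioi (0:ℝ), x ^ (q : ℝ) *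
        (lam ^ (m * n) * (m * n) * θ * p * x ^ (p - 1) / (lam + θ * x ^ p) ^ (m * n + 1)))
      = m * n * (lam / θ) ^ ((q : ℝ) / p) *
        (Real.Gamma ((q : ℝ) / p + 1) * Real.Gamma (m * n - (q : ℝ) / p)
          / Real.Gamma (((q : ℝ) / p + 1) + (m * n - (q : ℝ) / p))) := by
  set a : ℝ := (q : ℝ) / p
  change _ = m * n * (lam / θ) ^ a * beta (a + 1) (m * n - a)
  have ha : 0 ≤ a := by positivity
  set g : ℝ → ℝ := fun y ↦
    lam ^ (m * n) * (m * n) * θ * (y ^ (a + 1 - 1) / (lam + θ * y) ^ (a + 1 + (m * n - a)))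
  have hpt : ∀ x ∈ Ioi (0:ℝ), x ^ (q : ℝ) *
      (lam ^ (m * n) * (m * n) * θ * p * x ^ (p - 1) / (lam + θ * x ^ p) ^ (m * n + 1))
      = (p * x ^ (p - 1)) • g (x ^ p) := by
    intro x hx
    have hxa : (x ^ p) ^ a = x ^ (q : ℝ) := by
      rw [← rpow_mul (le_of_lt hx), mul_div_cancel₀ _ hp.ne']
    have hexp : a + 1 + (m * n - a) = m * n + 1 := by ring
    simp only [g]
    rw [add_sub_cancel_right, hexp, hxa, smul_eq_mul]
    ring
  rw [setIntegral_congr_fun measurableSet_Ioi hpt, integral_comp_rpow_Ioi_of_pos hp,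
    integral_const_mul, integral_Ioi_rpow_div_add_mul_rpow hlam hθ (by linarith) (by linarith),
    rpow_add_one hθ.ne', rpow_sub hlam, div_rpow hlam.le hθ.le]
  have : lam ^ a ≠ 0 := (rpow_pos_of_pos hlam a).ne'
  have : θ ^ a ≠ 0 := (rpow_pos_of_pos hθ a).ne'
  have : lam ^ (m * n) ≠ 0 := (rpow_pos_of_pos hlam _).ne'
  field_simp

/-- The q-th moment of the minimum of n i.i.d. generalized Burr XII variables:
∫₀^∞ x^q λ^{mn} mn θ p x^{p−1}/(λ+θx^p)^{mn+1} dx = mn (λ/θ)^{q/p} B(q/p+1, mn−q/p),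
where B(a,b) = Γ(a)Γ(b)/Γ(a+b). -/
theorem genBurrXII_min_moment (lam θ m p : ℝ) (hlam : 0 < lam) (hθ : 0 < θ)
    (hm : 0 < m) (hp : 0 < p) (n : ℕ) (hn : 1 ≤ n)
    (q : ℕ) (hq : (q : ℝ) / p < m * n) :
    (∫ x in Ioi (0:ℝ), x ^ (q : ℝ) *
        (lam ^ (m * n) * (m * n) * θ * p * x ^ (p - 1) / (lam + θ * x ^ p) ^ (m * n + 1)))
      = m * n * (lam / θ) ^ ((q : ℝ) / p) *
        (Real.Gamma ((q : ℝ) / p + 1) * Real.Gamma (m * n - (q : ℝ) / p)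
          / Real.Gamma (((q : ℝ) / p + 1) + (m * n - (q : ℝ) / p))) :=
  genBurrXII_min_moment_general lam θ m p hlam hθ hp n q hq
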